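/- Let C be a trifferent code of length n ≥ 2 and for 1 ≤ i ≤ n, j ∈ {0,1,2} let s_{i,j} := #{c ∈ C : c_i = j}. Then for every coordinate i and every two distinct symbols j_1, j_2 ∈ {0,1,2} one has s_{i,j_1} + s_{i,j_2} ≤ T(n−1); consequently, #C ≤ 2·T(n−1) − s_{i,j} for every coordinate i and every symbol j ∈ {0,1,2}. -/
import Mathlib

/-- A code `C ⊆ αⁿ` is trifferent if for any three pairwise distinct codewords
there exists a coordinate in which they pairwise differ. -/
def Trifferent {n : ℕ} {α : Type*} (C : Set (Fin n → α)) : Prop :=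
  ∀ x ∈ C, ∀ y ∈ C, ∀ z ∈ C, x ≠ y → x ≠ z → y ≠ z →
    ∃ i : Fin n, x i ≠ y i ∧ x i ≠ z i ∧ y i ≠ z i

/-- `T n` is the maximum cardinality of a trifferent code of length `n`
over the alphabet `{0,1,2}`. -/
noncomputable def T (n : ℕ) : ℕ :=
  sSup {m | ∃ C : Set (Fin n → Fin 3), Trifferent C ∧ C.ncard = m}

lemma T_bddAbove (m : ℕ) :
    BddAbove {k | ∃ C : Set (Fin m → Fin 3), Trifferent C ∧ C.ncard = k} := by
  refine ⟨Nat.card (Fin m → Fin 3), ?_⟩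
  rintro k ⟨C, -, rfl⟩
  simpa [Set.ncard_univ] using Set.ncard_le_ncard (Set.subset_univ C) Set.finite_univ

lemma le_T {m : ℕ} {C : Set (Fin m → Fin 3)} (h : Trifferent C) : C.ncard ≤ T m :=
  le_csSup (T_bddAbove m) ⟨C, h, rfl⟩

lemma two_le_T {m : ℕ} (hm : 1 ≤ m) : 2 ≤ T m := by
  have hne : (fun _ : Fin m => (0 : Fin 3)) ≠ (fun _ => 1) := by
    intro h
    have := congrFun h ⟨0, hm⟩
    simp at this
  have htr : Trifferent ({(fun _ : Fin m => (0:Fin 3)), (fun _ => 1)} : Set (Fin m → Fin 3)) := by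
    intro x hx y hy z hz hxy hxz hyz
    simp only [Set.mem_insert_iff, Set.mem_singleton_iff] at hx hy hz
    rcases hx with rfl|rfl <;> rcases hy with rfl|rfl <;> rcases hz with rfl|rfl <;> simp_all
  have := le_T htr
  rwa [Set.ncard_pair hne] at this

lemma pair_bound {m : ℕ} (hm : 1 ≤ m) (C : Set (Fin (m+1) → Fin 3)) (hC : Trifferent C)
    (i : Fin (m+1)) (j₁ j₂ : Fin 3) (hj : j₁ ≠ j₂) :
    {c ∈ C | c i = j₁ ∨ c i = j₂}.ncard ≤ T m := by
  set D := {c ∈ C | c i = j₁ ∨ c i = j₂} with hD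
  by_cases hcol : ∃ x ∈ D, ∃ y ∈ D, x ≠ y ∧ ∀ k : Fin m, x (i.succAbove k) = y (i.succAbove k)
  · obtain ⟨x, hx, y, hy, hxy, hagree⟩ := hcol
    have hxyi : x i ≠ y i := by
      intro h
      apply hxy
      funext k
      rcases eq_or_ne k i with rfl | hk
      · exact h
      · obtain ⟨k', rfl⟩ := Fin.exists_succAbove_eq hk
        exact hagree k'
    have hsub : D ⊆ {x, y} := by
      intro w hw
      by_contra hwmem
      simp only [Set.mem_insert_iff, Set.mem_singleton_iff, not_or] at hwmem
      obtain ⟨hwx, hwy⟩ := hwmem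
      obtain ⟨k, hk1, hk2, hk3⟩ := hC x hx.1 y hy.1 w hw.1 hxy (Ne.symm hwx) (Ne.symm hwy)
      have hki : k = i := by
        by_contra hk
        obtain ⟨k', rfl⟩ := Fin.exists_succAbove_eq hk
        exact hk1 (hagree k')
      subst hki
      rcases hx.2 with h1 | h1 <;> rcases hy.2 with h2 | h2 <;>
        rcases hw.2 with h3 | h3 <;> simp_all
    calc D.ncard ≤ ({x, y} : Set _).ncard := Set.ncard_le_ncard hsub (Set.toFinite _)
      _ = 2 := Set.ncard_pair hxy
      _ ≤ T m := two_le_T hm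
  · push_neg at hcol
    set f : (Fin (m+1) → Fin 3) → (Fin m → Fin 3) := fun c k => c (i.succAbove k) with hf
    have hinj : Set.InjOn f D := by
      intro x hx y hy hfe
      by_contra hne
      obtain ⟨k, hk⟩ := hcol x hx y hy hne
      exact hk (congrFun hfe k)
    have htrE : Trifferent (f '' D) := by
      rintro a ⟨x, hx, rfl⟩ b ⟨y, hy, rfl⟩ c ⟨z, hz, rfl⟩ hab hac hbc
      have hxy : x ≠ y := fun h => hab (by rw [h])
      have hxz : x ≠ z := fun h => hac (by rw [h])
      have hyz : y ≠ z := fun h => hbc (by rw [h])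
      obtain ⟨k, hk1, hk2, hk3⟩ := hC x hx.1 y hy.1 z hz.1 hxy hxz hyz
      have hki : k ≠ i := by
        rintro rfl
        rcases hx.2 with h1 | h1 <;> rcases hy.2 with h2 | h2 <;>
          rcases hz.2 with h3 | h3 <;> simp_all
      obtain ⟨k', rfl⟩ := Fin.exists_succAbove_eq hki
      exact ⟨k', hk1, hk2, hk3⟩
    have := le_T htrE
    rwa [Set.ncard_image_of_injOn hinj] at this

theorem symbol_count_bound {n : ℕ} (hn : 2 ≤ n)
    (C : Set (Fin n → Fin 3)) (hC : Trifferent C) :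
    (∀ (i : Fin n) (j₁ j₂ : Fin 3), j₁ ≠ j₂ →
      {c ∈ C | c i = j₁}.ncard + {c ∈ C | c i = j₂}.ncard ≤ T (n - 1)) ∧
    (∀ (i : Fin n) (j : Fin 3),
      C.ncard + {c ∈ C | c i = j}.ncard ≤ 2 * T (n - 1)) := by
  obtain ⟨m, rfl⟩ : ∃ m, n = m + 1 := ⟨n - 1, (Nat.succ_pred_eq_of_pos (by omega)).symm⟩
  have hm : 1 ≤ m := by omega
  simp only [Nat.add_sub_cancel]
  have key : ∀ (i : Fin (m+1)) (j₁ j₂ : Fin 3), j₁ ≠ j₂ →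
      {c ∈ C | c i = j₁}.ncard + {c ∈ C | c i = j₂}.ncard ≤ T m := by
    intro i j₁ j₂ hj
    have hun : {c ∈ C | c i = j₁} ∪ {c ∈ C | c i = j₂} = {c ∈ C | c i = j₁ ∨ c i = j₂} := by
      ext c; simp [and_or_left]
    have hdisj : Disjoint {c ∈ C | c i = j₁} {c ∈ C | c i = j₂} := by
      rw [Set.disjoint_left]
      rintro c ⟨-, rfl⟩ ⟨-, h⟩
      exact hj h
    have := Set.ncard_union_eq hdisj (Set.toFinite _) (Set.toFinite _)
    rw [hun] at this
    rw [← this]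
    exact pair_bound hm C hC i j₁ j₂ hj
  refine ⟨key, ?_⟩
  intro i j
  obtain ⟨j', j'', hjj', hjj'', hj'j'', hcover⟩ :
      ∃ j' j'' : Fin 3, j ≠ j' ∧ j ≠ j'' ∧ j' ≠ j'' ∧ ∀ a : Fin 3, a = j ∨ a = j' ∨ a = j'' := by
    revert j; decide
  have h1 := key i j j' hjj'
  have h2 := key i j j'' hjj''
  have h3 : C.ncard ≤ {c ∈ C | c i = j}.ncard + {c ∈ C | c i = j'}.ncard
      + {c ∈ C | c i = j''}.ncard := by
    have hsub : C ⊆ {c ∈ C | c i = j} ∪ {c ∈ C | c i = j'} ∪ {c ∈ C | c i = j''} := by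
      intro c hc
      rcases hcover (c i) with h | h | h
      · exact Or.inl (Or.inl ⟨hc, h⟩)
      · exact Or.inl (Or.inr ⟨hc, h⟩)
      · exact Or.inr ⟨hc, h⟩
    calc C.ncard ≤ ({c ∈ C | c i = j} ∪ {c ∈ C | c i = j'} ∪ {c ∈ C | c i = j''}).ncard :=
          Set.ncard_le_ncard hsub (Set.toFinite _)
      _ ≤ ({c ∈ C | c i = j} ∪ {c ∈ C | c i = j'}).ncard + {c ∈ C | c i = j''}.ncard :=
          Set.ncard_union_le _ _
      _ ≤ {c ∈ C | c i = j}.ncard + {c ∈ C | c i = j'}.ncard + {c ∈ C | c i = j''}.ncard := by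
          gcongr; exact Set.ncard_union_le _ _
  generalize {c ∈ C | c i = j}.ncard = a at *
  generalize {c ∈ C | c i = j'}.ncard = b at *
  generalize {c ∈ C | c i = j''}.ncard = d at *
  omega
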